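/- arXiv:0801.2931 — 7 statements merged into one kernel-verified Lean document; each statement's English description precedes it below -/
import Mathlib

section
/- A click allocation c_1 ≥ c_2 ≥ ... ≥ c_k (nonnegative reals) can be feasibly scheduled on slots with click rates D_1 > D_2 > ... > D_k if and only if for every ℓ ∈ {1,...,k}, c_1 + ... + c_ℓ ≤ D_1 + ... + D_ℓ. -/
/-- Feasibility of a click allocation via a fractional (preemptive) schedule:
`x i j` is the fraction of the time interval `[0,1]` during which bidder `i`
occupies slot `j`; no bidder is in two slots at once and no slot holds two
bidders at once, and bidder `i` receives `∑ j, x i j * D j` clicks. -/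
def FeasibleAllocation {k : ℕ} (D c : Fin k → ℝ) : Prop :=
  ∃ x : Fin k → Fin k → ℝ,
    (∀ i j, 0 ≤ x i j) ∧
    (∀ i, ∑ j, x i j ≤ 1) ∧
    (∀ j, ∑ i, x i j ≤ 1) ∧
    (∀ i, c i = ∑ j, x i j * D j)

/-!
Necessity: bidders `0, …, ℓ` together occupy slot `j` for a fraction `s j ∈ [0, 1]` of the time,
with `∑ j, s j ≤ ℓ + 1`; since `D` is decreasing, such a weighting of the rates collects at most
`D 0 + ⋯ + D ℓ`.

Sufficiency, by induction on `k`: schedules are doubly substochastic matrices `x` with `c = x D`,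
and these compose. If `c 0 ≤ D (last k)` then `c ≤ D` pointwise and a diagonal schedule works.
Otherwise `c 0` lies between two adjacent rates `D (p + 1) ≤ c 0 ≤ D p`. A convex combination of
two permutation matrices serves bidder `0` from these two slots and merges what is left of them
into one slot of rate `D p + D (p + 1) - c 0`; the other bidders are scheduled on the `k - 1`
resulting rates by induction, and the prefix-sum condition survives the merge.
-/

open Finset Matrix

theorem Fin.sum_Iic_succ {M : Type*} [AddCommMonoid M] {n : ℕ} (f : Fin (n + 1) → M)
    (i : Fin n) :
    ∑ j ∈ Iic i.succ, f j = f 0 + ∑ j ∈ Iic i, f j.succ := by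
  simp only [← filter_ge_eq_Iic, sum_filter, Fin.sum_univ_succ, Fin.zero_le, if_true,
    Fin.succ_le_succ_iff]

theorem Equiv.Perm.sum_Iic_comp {ι M : Type*} [LinearOrder ι] [LocallyFiniteOrderBot ι]
    [AddCommMonoid M] (π : Equiv.Perm ι) {ℓ : ι} (hπ : ∀ x, ℓ < x → π x = x) (f : ι → M) :
    ∑ x ∈ Iic ℓ, f (π x) = ∑ x ∈ Iic ℓ, f x :=
  π.sum_comp _ f fun x hx => mem_Iic.mpr (not_lt.mp fun h => hx (hπ x h))

theorem Fin.exists_succ_le_and_le_castSucc {α : Type*} [LinearOrder α] {k : ℕ}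
    {f : Fin (k + 1) → α} {y : α} (h0 : y ≤ f 0) (hlast : f (last k) < y) :
    ∃ p : Fin k, f p.succ ≤ y ∧ y ≤ f p.castSucc := by
  by_contra! h
  have hle : ∀ j, y ≤ f j := Fin.induction h0 fun p hp =>
    ((lt_or_ge y (f p.succ)).resolve_right fun h' => (h p h').not_ge hp).le
  exact (hle (last k)).not_gt hlast

theorem Fin.cycleRange_symm_of_gt {n : ℕ} {i j : Fin n} (h : i < j) : i.cycleRange.symm j = j :=
  (Equiv.symm_apply_eq _).mpr (Fin.cycleRange_of_gt h).symm

theorem Fin.castSucc_le_succAbove {n : ℕ} (p : Fin (n + 1)) (i : Fin n) :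
    i.castSucc ≤ p.succAbove i := by
  rcases lt_or_ge i.castSucc p with h | h
  · rw [Fin.succAbove_of_castSucc_lt _ _ h]
  · rw [Fin.succAbove_of_le_castSucc _ _ h]; exact Fin.castSucc_le_succ i

theorem Fin.succAbove_le_succ {n : ℕ} (p : Fin (n + 1)) (i : Fin n) : p.succAbove i ≤ i.succ := by
  rcases lt_or_ge i.castSucc p with h | h
  · rw [Fin.succAbove_of_castSucc_lt _ _ h]; exact Fin.castSucc_le_succ i
  · rw [Fin.succAbove_of_le_castSucc _ _ h]

theorem Fin.antitone_of_succ_le_of_le_castSucc {α : Type*} [Preorder α] {k : ℕ}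
    {f : Fin (k + 1) → α} {g : Fin k → α} (hf : Antitone f) (h₁ : ∀ i, f i.succ ≤ g i)
    (h₂ : ∀ i, g i ≤ f i.castSucc) :
    Antitone g := by
  intro i j hij
  rcases hij.eq_or_lt with rfl | hij
  · exact le_rfl
  · exact (h₂ j).trans ((hf (Fin.succ_le_castSucc_iff.mpr hij)).trans (h₁ i))

theorem sum_mul_le_sum_Iic {ι : Type*} [Fintype ι] [LinearOrder ι] [LocallyFiniteOrderBot ι]
    {D s : ι → ℝ} {ℓ : ι} (hD : Antitone D) (hDℓ : 0 ≤ D ℓ) (hs0 : ∀ j, 0 ≤ s j)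
    (hs1 : ∀ j, s j ≤ 1) (hsum : ∑ j, s j ≤ #(Iic ℓ)) :
    ∑ j, s j * D j ≤ ∑ j ∈ Iic ℓ, D j := by
  set e : ι → ℝ := fun j => if j ≤ ℓ then 1 else 0
  have sum_Iic_eq (f : ι → ℝ) : ∑ j ∈ Iic ℓ, f j = ∑ j, e j * f j := by
    simp only [e, ite_mul, one_mul, zero_mul, ← sum_filter, filter_ge_eq_Iic]
  -- `s - e` is `≤ 0` where `D ≥ D ℓ` and `≥ 0` where `D ≤ D ℓ`
  have key (j : ι) : (s j - e j) * D j ≤ (s j - e j) * D ℓ := by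
    by_cases hj : j ≤ ℓ
    · exact mul_le_mul_of_nonpos_left (hD hj) (by simp [e, hj, hs1 j])
    · exact mul_le_mul_of_nonneg_left (hD (not_le.mp hj).le) (by simp [e, hj, hs0 j])
  have he : ∑ j, e j = #(Iic ℓ) := by simpa using (sum_Iic_eq fun _ => 1).symm
  have := sum_le_sum fun j (_ : j ∈ univ) => key j
  rw [← sum_mul, sum_sub_distrib, he] at this
  simp only [sub_mul, sum_sub_distrib, ← sum_Iic_eq] at this
  linarith [mul_nonpos_of_nonpos_of_nonneg (sub_nonpos.mpr hsum) hDℓ]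

structure Matrix.IsDoublySubstochastic {m n : Type*} [Fintype m] [Fintype n]
    (x : Matrix m n ℝ) : Prop where
  nonneg : ∀ i j, 0 ≤ x i j
  sum_row_le_one : ∀ i, ∑ j, x i j ≤ 1
  sum_col_le_one : ∀ j, ∑ i, x i j ≤ 1

namespace Matrix.IsDoublySubstochastic

variable {l m n : Type*} [Fintype l] [Fintype m] [Fintype n]

theorem mul {x : Matrix l m ℝ} {y : Matrix m n ℝ} (hx : x.IsDoublySubstochastic)
    (hy : y.IsDoublySubstochastic) : (x * y).IsDoublySubstochastic where
  nonneg i j := sum_nonneg fun q _ => mul_nonneg (hx.nonneg i q) (hy.nonneg q j)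
  sum_row_le_one i := calc
    ∑ j, (x * y) i j = ∑ q, x i q * ∑ j, y q j := by
        simp only [mul_apply, mul_sum]; exact sum_comm
    _ ≤ ∑ q, x i q :=
        sum_le_sum fun q _ => mul_le_of_le_one_right (hx.nonneg i q) (hy.sum_row_le_one q)
    _ ≤ 1 := hx.sum_row_le_one i
  sum_col_le_one j := calc
    ∑ i, (x * y) i j = ∑ q, (∑ i, x i q) * y q j := by
        simp only [mul_apply, sum_mul]; exact sum_comm
    _ ≤ ∑ q, y q j :=
        sum_le_sum fun q _ => mul_le_of_le_one_left (hy.nonneg q j) (hx.sum_col_le_one q)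
    _ ≤ 1 := hy.sum_col_le_one j

theorem of_mem_doublyStochastic [DecidableEq n] {x : Matrix n n ℝ}
    (hx : x ∈ doublyStochastic ℝ n) : x.IsDoublySubstochastic where
  nonneg _ _ := nonneg_of_mem_doublyStochastic hx
  sum_row_le_one i := (sum_row_of_mem_doublyStochastic hx i).le
  sum_col_le_one j := (sum_col_of_mem_doublyStochastic hx j).le

theorem diagonal [DecidableEq n] {v : n → ℝ} (h0 : ∀ i, 0 ≤ v i) (h1 : ∀ i, v i ≤ 1) :
    (diagonal v).IsDoublySubstochastic where
  nonneg i j := by rw [diagonal_apply]; split_ifs <;> simp [h0]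
  sum_row_le_one i := by simpa [diagonal_apply] using h1 i
  sum_col_le_one j := by simpa [diagonal_apply] using h1 j

end Matrix.IsDoublySubstochastic

theorem feasibleAllocation_iff {k : ℕ} {D c : Fin k → ℝ} :
    FeasibleAllocation D c ↔
      ∃ x : Matrix (Fin k) (Fin k) ℝ, x.IsDoublySubstochastic ∧ x *ᵥ D = c :=
  ⟨fun ⟨x, h0, hr, hc, he⟩ => ⟨x, ⟨h0, hr, hc⟩, funext fun i => (he i).symm⟩,
    fun ⟨x, ⟨h0, hr, hc⟩, he⟩ => ⟨x, h0, hr, hc, fun i => (congrFun he i).symm⟩⟩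

namespace FeasibleAllocation

variable {k : ℕ} {D c : Fin k → ℝ}

theorem trans {D' : Fin k → ℝ} (h₁ : FeasibleAllocation D D') (h₂ : FeasibleAllocation D' c) :
    FeasibleAllocation D c := by
  obtain ⟨x, hx, rfl⟩ := feasibleAllocation_iff.mp h₁
  obtain ⟨y, hy, rfl⟩ := feasibleAllocation_iff.mp h₂
  exact feasibleAllocation_iff.mpr ⟨y * x, hy.mul hx, (mulVec_mulVec D y x).symm⟩

theorem cons (h : FeasibleAllocation D c) (a : ℝ) :
    FeasibleAllocation (Fin.cons a D : Fin (k + 1) → ℝ) (Fin.cons a c) := by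
  obtain ⟨x, h0, hr, hc, he⟩ := h
  refine ⟨Fin.cons (Fin.cons 1 0) fun i => Fin.cons 0 (x i), ?_, ?_, ?_, ?_⟩
  · intro i j
    cases i using Fin.cases <;> cases j using Fin.cases <;> simp [h0]
  · intro i
    cases i using Fin.cases <;> simp [Fin.sum_univ_succ, hr]
  · intro j
    cases j using Fin.cases <;> simp [Fin.sum_univ_succ, hc]
  · intro i
    cases i using Fin.cases <;> simp [Fin.sum_univ_succ, he]

end FeasibleAllocation

theorem feasibleAllocation_mulVec {k : ℕ} {x : Matrix (Fin k) (Fin k) ℝ}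
    (hx : x ∈ doublyStochastic ℝ (Fin k)) (D : Fin k → ℝ) : FeasibleAllocation D (x *ᵥ D) :=
  feasibleAllocation_iff.mpr ⟨x, .of_mem_doublyStochastic hx, rfl⟩

theorem feasibleAllocation_of_le {k : ℕ} {c c' : Fin k → ℝ} (h0 : 0 ≤ c) (h : c ≤ c') :
    FeasibleAllocation c' c := by
  refine feasibleAllocation_iff.mpr ⟨diagonal fun i => c i / c' i,
    .diagonal (fun i => div_nonneg (h0 i) ((h0 i).trans (h i)))
      (fun i => div_le_one_of_le₀ (h i) ((h0 i).trans (h i))), funext fun i => ?_⟩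
  rw [mulVec_diagonal]
  by_cases hi : c' i = 0
  · have hci : c i = 0 := le_antisymm (hi ▸ h i) (h0 i)
    simp [hi, hci]
  · exact div_mul_cancel₀ _ hi

theorem FeasibleAllocation.sum_Iic_le {k : ℕ} {D c : Fin k → ℝ} (h : FeasibleAllocation D c)
    (hD : Antitone D) (hD0 : ∀ j, 0 ≤ D j) (ℓ : Fin k) :
    ∑ i ∈ Iic ℓ, c i ≤ ∑ i ∈ Iic ℓ, D i := by
  obtain ⟨x, h0, hr, hc, he⟩ := h
  calc ∑ i ∈ Iic ℓ, c i = ∑ j, (∑ i ∈ Iic ℓ, x i j) * D j := by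
        simp only [he, sum_mul]; exact sum_comm
    _ ≤ ∑ i ∈ Iic ℓ, D i := by
      refine sum_mul_le_sum_Iic hD (hD0 ℓ) (fun j => sum_nonneg fun i _ => h0 i j)
        (fun j => (sum_le_univ_sum_of_nonneg fun i => h0 i j).trans (hc j)) ?_
      rw [sum_comm]
      simpa using sum_le_sum fun i (_ : i ∈ Iic ℓ) => hr i

theorem exists_feasibleAllocation_cons_of_mem_segment {k : ℕ} {D : Fin (k + 1) → ℝ}
    (hD : Antitone D) {p : Fin k} {y : ℝ} (hy : y ∈ segment ℝ (D p.succ) (D p.castSucc)) :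
    ∃ E : Fin k → ℝ, FeasibleAllocation D (Fin.cons y E) ∧ (∀ i, D i.succ ≤ E i) ∧
      (∀ i, E i ≤ D i.castSucc) ∧ ∀ ℓ, p ≤ ℓ → ∑ i ∈ Iic ℓ, E i = ∑ i ∈ Iic ℓ.succ, D i - y := by
  obtain ⟨a, b, ha, hb, hab, rfl⟩ := hy
  -- `σ` moves slot `p + 1` to the front, `π` moves slot `p` there instead
  set σ : Equiv.Perm (Fin (k + 1)) := p.succ.cycleRange.symm
  set π : Equiv.Perm (Fin (k + 1)) := σ * Equiv.swap 0 p.succ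
  set g : Fin (k + 1) → ℝ := (a • σ.permMatrix ℝ + b • π.permMatrix ℝ) *ᵥ D
  have hg : g = a • (D ∘ σ) + b • (D ∘ π) := by
    simp only [g, add_mulVec, smul_mulVec, permMatrix_mulVec]
  have hg0 : g 0 = a • D p.succ + b • D p.castSucc := by
    simp [hg, σ, π, Fin.cycleRange_symm_succ]
  have hg_succ (i : Fin k) (hi : i ≠ p) : g i.succ = D (p.succ.succAbove i) := by
    have : Equiv.swap 0 p.succ i.succ = i.succ :=
      Equiv.swap_apply_of_ne_of_ne (Fin.succ_ne_zero i) (Fin.succ_injective _ |>.ne hi)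
    simp [hg, σ, π, this, Fin.cycleRange_symm_succ, ← add_mul, hab]
  have hg_p : g p.succ = a • D p.castSucc + b • D p.succ := by
    simp [hg, σ, π, Fin.cycleRange_symm_succ]
  have hbounds (i : Fin k) : D i.succ ≤ g i.succ ∧ g i.succ ≤ D i.castSucc := by
    have hDi : D i.succ ≤ D i.castSucc := hD (Fin.castSucc_le_succ i)
    by_cases hi : i = p
    · subst hi
      have hmem : g i.succ ∈ segment ℝ (D i.castSucc) (D i.succ) := ⟨a, b, ha, hb, hab, hg_p.symm⟩
      exact segment_subset_Icc hDi (segment_symm ℝ (D i.castSucc) (D i.succ) ▸ hmem)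
    · rw [hg_succ i hi]
      exact ⟨hD (Fin.succAbove_le_succ _ i), hD (Fin.castSucc_le_succAbove _ i)⟩
  refine ⟨Fin.tail g, ?_, fun i => (hbounds i).1, fun i => (hbounds i).2, ?_⟩
  · rw [← hg0, Fin.cons_self_tail]
    exact feasibleAllocation_mulVec (convex_doublyStochastic permMatrix_mem_doublyStochastic
      permMatrix_mem_doublyStochastic ha hb hab) D
  intro ℓ hℓ
  have hfix (x) (hx : ℓ.succ < x) : σ x = x ∧ π x = x := by
    have hpx : p.succ < x := (Fin.succ_le_succ_iff.mpr hℓ).trans_lt hx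
    have hσ : σ x = x := Fin.cycleRange_symm_of_gt hpx
    refine ⟨hσ, ?_⟩
    rw [Equiv.Perm.mul_apply, Equiv.swap_apply_of_ne_of_ne ((Fin.zero_le _).trans_lt hpx).ne'
      hpx.ne', hσ]
  have hsum : ∑ i ∈ Iic ℓ.succ, g i = ∑ i ∈ Iic ℓ.succ, D i := by
    simp only [hg, Pi.add_apply, Pi.smul_apply, Function.comp_apply, smul_eq_mul, sum_add_distrib,
      ← mul_sum, σ.sum_Iic_comp (fun x hx => (hfix x hx).1),
      π.sum_Iic_comp (fun x hx => (hfix x hx).2), ← add_mul, hab, one_mul]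
  rw [← hsum, Fin.sum_Iic_succ, hg0]
  simp [Fin.tail]

theorem feasibleAllocation_of_sum_Iic_le {k : ℕ} {D c : Fin k → ℝ} (hD : Antitone D)
    (hc : Antitone c) (hc0 : 0 ≤ c) (h : ∀ ℓ, ∑ i ∈ Iic ℓ, c i ≤ ∑ i ∈ Iic ℓ, D i) :
    FeasibleAllocation D c := by
  induction k with
  | zero => exact feasibleAllocation_of_le hc0 finZeroElim
  | succ k ih =>
    by_cases hlast : c 0 ≤ D (Fin.last k)
    · exact feasibleAllocation_of_le hc0 fun i =>
        (hc (Fin.zero_le i)).trans (hlast.trans (hD (Fin.le_last i)))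
    have hfirst : c 0 ≤ D 0 := by
      simpa only [← bot_eq_zero, Iic_bot, sum_singleton] using h ⊥
    obtain ⟨p, hp₁, hp₂⟩ := Fin.exists_succ_le_and_le_castSucc hfirst (not_le.mp hlast)
    have hseg : c 0 ∈ segment ℝ (D p.succ) (D p.castSucc) := by
      rw [segment_eq_Icc (hp₁.trans hp₂)]; exact ⟨hp₁, hp₂⟩
    obtain ⟨E, hDE, hE₁, hE₂, hEsum⟩ := exists_feasibleAllocation_cons_of_mem_segment hD hseg
    have htail : ∀ ℓ, ∑ i ∈ Iic ℓ, c i.succ ≤ ∑ i ∈ Iic ℓ, E i := by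
      intro ℓ
      rcases lt_or_ge ℓ p with hℓ | hℓ
      · refine sum_le_sum fun i hi => ?_
        have hip : i.succ ≤ p.castSucc :=
          Fin.succ_le_castSucc_iff.mpr ((mem_Iic.mp hi).trans_lt hℓ)
        exact (hc (Fin.zero_le _)).trans (hp₂.trans ((hD hip).trans (hE₁ i)))
      · have := h ℓ.succ
        rw [Fin.sum_Iic_succ] at this
        rw [hEsum ℓ hℓ]
        linarith
    have hE : FeasibleAllocation E (Fin.tail c) :=
      ih (Fin.antitone_of_succ_le_of_le_castSucc hD hE₁ hE₂)
        (hc.comp_monotone Fin.strictMono_succ.monotone) (fun i => hc0 i.succ) htail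
    simpa only [Fin.cons_self_tail] using hDE.trans (hE.cons (c 0))

/-- A click allocation `c₁ ≥ ... ≥ c_k ≥ 0` can be feasibly scheduled on slots with
click rates `D₁ > ... > D_k > 0` iff every prefix sum of `c` is at most the
corresponding prefix sum of `D`. -/
theorem stmt0 {k : ℕ} (D c : Fin k → ℝ)
    (hD : StrictAnti D) (hDpos : ∀ j, 0 < D j)
    (hc : Antitone c) (hcnonneg : ∀ i, 0 ≤ c i) :
    FeasibleAllocation D c ↔
      ∀ ℓ : Fin k, ∑ i ∈ Finset.Iic ℓ, c i ≤ ∑ i ∈ Finset.Iic ℓ, D i :=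
  ⟨fun h => h.sum_Iic_le hD.antitone fun j => (hDpos j).le,
    feasibleAllocation_of_sum_Iic_le hD.antitone hc hcnonneg⟩
end

section
/- Given jobs with service requirements x_1 ≥ ... ≥ x_k ≥ 0 and machines with speeds s_1 > ... > s_k > 0, a preemptive schedule completing all jobs within one unit of time exists if and only if Σ_{i=1}^ℓ x_i ≤ Σ_{i=1}^ℓ s_i for all ℓ = 1,...,k. -/
/-!
Necessity: the first `ℓ + 1` jobs are processed by machine `j` for a total time `w j ∈ [0, 1]`
with `∑ j, w j ≤ ℓ + 1`, and for sorted speeds `∑ j, w j * s j` is largest when the whole weight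
sits on the `ℓ + 1` fastest machines.

Sufficiency, by induction on `k`: if the largest job `x 0` fits on the slowest machine, every job
gets a machine of its own. Otherwise `s (m + 1) < x 0 ≤ s m` for some `m`, and
`x 0 = α * s m + β * s (m + 1)`. Letting machines `m` and `m + 1` swap their jobs for a fraction
`β` of the time is a doubly stochastic transformation of the speed vector; afterwards machine `m`
has effective speed exactly `x 0` and is given to job `0`, while the other `k - 1` effective
speeds interlace the original ones, so the remaining jobs satisfy the prefix conditions again.
-/

open Finset Matrix

/-- Existence of a preemptive schedule completing all jobs within one unit of time:
`t i j` is the amount of time job `i` runs on machine `j`; each job is on at most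
one machine at a time and each machine processes at most one job at a time
(so each job's total time and each machine's total busy time is at most `1`),
and job `i` is completed, i.e. receives `∑ j, t i j * s j = x i` units of processing. -/
def PreemptiveScheduleInUnitTime {k : ℕ} (s x : Fin k → ℝ) : Prop :=
  ∃ t : Fin k → Fin k → ℝ,
    (∀ i j, 0 ≤ t i j) ∧
    (∀ i, ∑ j, t i j ≤ 1) ∧
    (∀ j, ∑ i, t i j ≤ 1) ∧
    (∀ i, x i = ∑ j, t i j * s j)

theorem Fin.exists_castSucc_and_not_succ {n : ℕ} (p : Fin (n + 1) → Prop) (h0 : p 0)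
    (hlast : ¬ p (Fin.last n)) : ∃ m : Fin n, p m.castSucc ∧ ¬ p m.succ := by
  induction n with
  | zero => exact absurd h0 hlast
  | succ n ih =>
    by_cases h : p (Fin.last n).castSucc
    · exact ⟨Fin.last n, h, hlast⟩
    · obtain ⟨m, hm, hm'⟩ := ih (p ∘ Fin.castSucc) h0 h
      exact ⟨m.castSucc, hm, by rw [Fin.succ_castSucc]; exact hm'⟩

theorem Fin.add_sum_Iic_succAbove {M : Type*} [AddCommMonoid M] {n : ℕ} (f : Fin (n + 1) → M)
    {p : Fin (n + 1)} {ℓ : Fin n} (hp : p ≤ ℓ.succ) :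
    f p + ∑ i ∈ Iic ℓ, f (p.succAbove i) = ∑ i ∈ Iic ℓ.succ, f i := by
  have hle : ∀ i, p.succAbove i ≤ ℓ.succ ↔ i ≤ ℓ := by
    intro i
    rw [Fin.succAbove]
    split_ifs <;> simp only [Fin.le_def, Fin.lt_def, Fin.val_castSucc, Fin.val_succ] at * <;> omega
  have hmap : (Iic ℓ).map p.succAboveEmb = (Iic ℓ.succ).erase p := by
    ext j
    simp only [mem_map, mem_Iic, mem_erase, Fin.coe_succAboveEmb]
    constructor
    · rintro ⟨i, hi, rfl⟩
      exact ⟨Fin.succAbove_ne p i, (hle i).2 hi⟩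
    · rintro ⟨hj, hjℓ⟩
      obtain ⟨i, rfl⟩ := Fin.exists_succAbove_eq hj
      exact ⟨i, (hle i).1 hjℓ, rfl⟩
  rw [← add_sum_erase _ _ (mem_Iic.2 hp), ← hmap, sum_map, Fin.coe_succAboveEmb]

theorem Fin.antitone_of_interlaced {n : ℕ} {s : Fin (n + 1) → ℝ} {s' : Fin n → ℝ}
    (hs : Antitone s) (h : ∀ j, s' j ∈ Set.Icc (s j.succ) (s j.castSucc)) : Antitone s' := by
  intro i j hij
  rcases hij.eq_or_lt with rfl | hlt
  · exact le_rfl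
  · calc s' j ≤ s j.castSucc := (h j).2
      _ ≤ s i.succ := hs (Fin.succ_le_castSucc_iff.2 hlt)
      _ ≤ s' i := (h i).1

theorem sum_mul_le_sum_of_le_one {ι : Type*} [Fintype ι] (A : Finset ι) {w s : ι → ℝ} {c : ℝ}
    (hc : 0 ≤ c) (hw0 : ∀ j, 0 ≤ w j) (hw1 : ∀ j, w j ≤ 1) (hw : ∑ j, w j ≤ #A)
    (hsA : ∀ j ∈ A, c ≤ s j) (hsAc : ∀ j ∉ A, s j ≤ c) :
    ∑ j, w j * s j ≤ ∑ j ∈ A, s j := by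
  classical
  have hpt : ∀ j, w j * s j ≤ c * w j + if j ∈ A then s j - c else 0 := by
    intro j
    split_ifs with hj
    · nlinarith [hsA j hj, hw1 j]
    · nlinarith [hsAc j hj, hw0 j]
  calc ∑ j, w j * s j ≤ ∑ j, (c * w j + if j ∈ A then s j - c else 0) :=
        sum_le_sum fun j _ => hpt j
    _ = c * ∑ j, w j + (∑ j ∈ A, s j - #A * c) := by
      rw [sum_add_distrib, ← mul_sum, sum_ite_mem, univ_inter, sum_sub_distrib, sum_const,
        nsmul_eq_mul]
    _ ≤ ∑ j ∈ A, s j := by nlinarith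

/-- The effective speeds when the jobs on machines `i` and `j` trade places for a fraction `β`
of the time. -/
def timeShare {ι : Type*} [DecidableEq ι] (α β : ℝ) (i j : ι) (s : ι → ℝ) : ι → ℝ :=
  α • s + β • (s ∘ Equiv.swap i j)

section timeShare

variable {ι : Type*} [DecidableEq ι] {α β : ℝ} {i j : ι} {s : ι → ℝ}

theorem timeShare_apply (l : ι) :
    timeShare α β i j s l = α * s l + β * s (Equiv.swap i j l) := rfl

theorem timeShare_apply_of_ne {l : ι} (hi : l ≠ i) (hj : l ≠ j) (hαβ : α + β = 1) :
    timeShare α β i j s l = s l := by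
  rw [timeShare_apply, Equiv.swap_apply_of_ne_of_ne hi hj, ← add_mul, hαβ, one_mul]

theorem sum_timeShare {B : Finset ι} (hi : i ∈ B) (hj : j ∈ B) (hαβ : α + β = 1) :
    ∑ l ∈ B, timeShare α β i j s l = ∑ l ∈ B, s l := by
  have hswap : {l | Equiv.swap i j l ≠ l} ⊆ B := fun l hl => by
    by_contra hlB
    exact hl (Equiv.swap_apply_of_ne_of_ne (fun h => hlB (h ▸ hi)) fun h => hlB (h ▸ hj))
  simp only [timeShare_apply, sum_add_distrib, ← mul_sum, Equiv.Perm.sum_comp _ _ _ hswap,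
    ← add_mul, hαβ, one_mul]

end timeShare

theorem Fin.timeShare_succAbove_mem_Icc {n : ℕ} {s : Fin (n + 1) → ℝ} (hs : Antitone s)
    {α β : ℝ} (hα : 0 ≤ α) (hβ : 0 ≤ β) (hαβ : α + β = 1) (m j : Fin n) :
    timeShare α β m.castSucc m.succ s (m.castSucc.succAbove j) ∈
      Set.Icc (s j.succ) (s j.castSucc) := by
  have hstep : s j.succ ≤ s j.castSucc := hs (Fin.castSucc_le_succ j)
  rcases lt_trichotomy j m with hjm | rfl | hmj
  · rw [Fin.succAbove_castSucc_of_lt _ _ hjm, timeShare_apply_of_ne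
      (Fin.castSucc_lt_castSucc_iff.2 hjm).ne (Fin.castSucc_lt_succ_iff.2 hjm.le).ne hαβ]
    exact ⟨hstep, le_rfl⟩
  · rw [Fin.succAbove_castSucc_self, timeShare_apply, Equiv.swap_apply_right]
    obtain rfl : α = 1 - β := by linarith
    constructor <;> nlinarith [mul_le_mul_of_nonneg_left hstep hβ]
  · rw [Fin.succAbove_castSucc_of_le _ _ hmj.le, timeShare_apply_of_ne
      (Fin.castSucc_lt_succ_iff.2 hmj.le).ne' (Fin.succ_lt_succ_iff.2 hmj).ne' hαβ]
    exact ⟨le_rfl, hstep⟩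

theorem Fin.sum_Iic_tail_le_removeNth_timeShare {n : ℕ} {s x : Fin (n + 1) → ℝ}
    (hs : Antitone s) (hx : Antitone x) (hsum : ∀ ℓ, ∑ i ∈ Iic ℓ, x i ≤ ∑ i ∈ Iic ℓ, s i)
    {α β : ℝ} (hα : 0 ≤ α) (hβ : 0 ≤ β) (hαβ : α + β = 1) {m : Fin n} (hm : x 0 ≤ s m.castSucc)
    (hu : timeShare α β m.castSucc m.succ s m.castSucc = x 0) (ℓ : Fin n) :
    ∑ i ∈ Iic ℓ, Fin.tail x i ≤
      ∑ i ∈ Iic ℓ, Fin.removeNth m.castSucc (timeShare α β m.castSucc m.succ s) i := by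
  rcases lt_or_ge ℓ m with hℓm | hmℓ
  · refine sum_le_sum fun i hi => ?_
    calc Fin.tail x i ≤ x 0 := hx (Fin.zero_le _)
      _ ≤ s m.castSucc := hm
      _ ≤ s i.succ := hs (Fin.succ_le_castSucc_iff.2 ((mem_Iic.1 hi).trans_lt hℓm))
      _ ≤ _ := (Fin.timeShare_succAbove_mem_Icc hs hα hβ hαβ m i).1
  · have hmℓ' : m.succ ≤ ℓ.succ := Fin.succ_le_succ_iff.2 hmℓ
    have hmℓ'' : m.castSucc ≤ ℓ.succ := (Fin.castSucc_le_succ m).trans hmℓ'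
    have hx' := Fin.add_sum_Iic_succAbove x (Fin.zero_le ℓ.succ)
    have hu' := Fin.add_sum_Iic_succAbove (timeShare α β m.castSucc m.succ s) hmℓ''
    rw [sum_timeShare (mem_Iic.2 hmℓ'') (mem_Iic.2 hmℓ') hαβ, hu] at hu'
    simp only [Fin.succAbove_zero] at hx'
    have := hsum ℓ.succ
    simp only [Fin.removeNth, Fin.tail]
    linarith

namespace PreemptiveScheduleInUnitTime

variable {k : ℕ} {s x : Fin k → ℝ}

theorem sum_Iic_le (h : PreemptiveScheduleInUnitTime s x) (hs : Antitone s) (hs0 : ∀ j, 0 ≤ s j)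
    (ℓ : Fin k) : ∑ i ∈ Iic ℓ, x i ≤ ∑ i ∈ Iic ℓ, s i := by
  obtain ⟨t, ht0, hrow, hcol, hx⟩ := h
  have hload : ∑ i ∈ Iic ℓ, x i = ∑ j, (∑ i ∈ Iic ℓ, t i j) * s j := by
    simp only [hx, sum_mul]
    exact sum_comm
  rw [hload]
  refine sum_mul_le_sum_of_le_one _ (hs0 ℓ) (fun j => sum_nonneg fun i _ => ht0 i j)
    (fun j => (sum_le_sum_of_subset_of_nonneg (subset_univ _) fun i _ _ => ht0 i j).trans (hcol j))
    ?_ (fun j hj => hs (mem_Iic.1 hj)) (fun j hj => hs (not_le.1 (mem_Iic.not.1 hj)).le)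
  calc ∑ j, ∑ i ∈ Iic ℓ, t i j = ∑ i ∈ Iic ℓ, ∑ j, t i j := sum_comm
    _ ≤ ∑ i ∈ Iic ℓ, 1 := sum_le_sum fun i _ => hrow i
    _ = #(Iic ℓ) := by simp

theorem of_le (hs : ∀ j, 0 < s j) (hx : ∀ i, 0 ≤ x i) (hxs : ∀ i, x i ≤ s i) :
    PreemptiveScheduleInUnitTime s x := by
  refine ⟨fun i => Pi.single i (x i / s i), fun i j => ?_, fun i => ?_, fun j => ?_, fun i => ?_⟩
  · rcases eq_or_ne j i with rfl | hji
    · simpa using div_nonneg (hx j) (hs j).le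
    · simp [hji]
  · simpa using (div_le_one (hs i)).2 (hxs i)
  · simpa [Pi.single_apply] using (div_le_one (hs j)).2 (hxs j)
  · simp [Pi.single_apply, div_mul_cancel₀ _ (hs i).ne']

theorem of_mulVec {Q : Matrix (Fin k) (Fin k) ℝ} (hQ : Q ∈ doublyStochastic ℝ (Fin k))
    (h : PreemptiveScheduleInUnitTime (Q *ᵥ s) x) : PreemptiveScheduleInUnitTime s x := by
  obtain ⟨t, ht0, hrow, hcol, hx⟩ := h
  refine ⟨Matrix.of t * Q, fun i j => ?_, fun i => ?_, fun j => ?_, fun i => ?_⟩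
  · rw [mul_apply]
    exact sum_nonneg fun l _ => mul_nonneg (ht0 i l) (nonneg_of_mem_doublyStochastic hQ)
  · calc ∑ j, (Matrix.of t * Q) i j = ∑ l, t i l * ∑ j, Q l j := by
          simp only [mul_apply, of_apply, mul_sum]; exact sum_comm
      _ ≤ 1 := by simpa [sum_row_of_mem_doublyStochastic hQ] using hrow i
  · calc ∑ i, (Matrix.of t * Q) i j = ∑ l, (∑ i, t i l) * Q l j := by
          simp only [mul_apply, of_apply, sum_mul]; exact sum_comm
      _ ≤ ∑ l, Q l j := sum_le_sum fun l _ =>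
          mul_le_of_le_one_left (nonneg_of_mem_doublyStochastic hQ) (hcol l)
      _ = 1 := sum_col_of_mem_doublyStochastic hQ j
  · have := congrFun (mulVec_mulVec s (Matrix.of t) Q) i
    simp only [mulVec, dotProduct, of_apply] at this
    rw [hx i]
    exact this

theorem of_timeShare {α β : ℝ} (hα : 0 ≤ α) (hβ : 0 ≤ β) (hαβ : α + β = 1) (i j : Fin k)
    (h : PreemptiveScheduleInUnitTime (timeShare α β i j s) x) :
    PreemptiveScheduleInUnitTime s x := by
  refine of_mulVec (Q := α • 1 + β • (Equiv.swap i j).permMatrix ℝ)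
    (convex_doublyStochastic (one_mem _) permMatrix_mem_doublyStochastic hα hβ hαβ) ?_
  rwa [add_mulVec, smul_mulVec, smul_mulVec, one_mulVec, permMatrix_mulVec]

theorem insertNth_cons {n : ℕ} {s' x' : Fin n → ℝ} (h : PreemptiveScheduleInUnitTime s' x')
    (p : Fin (n + 1)) (a : ℝ) :
    PreemptiveScheduleInUnitTime (p.insertNth a s') (Fin.cons a x') := by
  obtain ⟨t, ht0, hrow, hcol, hx⟩ := h
  refine ⟨Fin.cons (Pi.single p 1) fun i => p.insertNth 0 (t i), ?_, ?_, ?_, ?_⟩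
  · refine Fin.cases (fun j => ?_) (fun i => p.succAboveCases ?_ ?_)
    · rcases eq_or_ne j p with rfl | hjp <;> simp [*]
    · simp
    · simpa using ht0 i
  · refine Fin.cases ?_ (fun i => ?_) <;> simp [Fin.sum_univ_succAbove _ p, hrow]
  · refine p.succAboveCases ?_ (fun j => ?_) <;> simp [Fin.sum_univ_succ, Fin.succAbove_ne, hcol]
  · refine Fin.cases ?_ (fun i => ?_) <;> simp [Fin.sum_univ_succAbove _ p, hx]

theorem of_sum_Iic_le {n : ℕ} {s x : Fin n → ℝ} (hs : Antitone s) (hs0 : ∀ j, 0 < s j)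
    (hx : Antitone x) (hx0 : ∀ i, 0 ≤ x i) (hsum : ∀ ℓ, ∑ i ∈ Iic ℓ, x i ≤ ∑ i ∈ Iic ℓ, s i) :
    PreemptiveScheduleInUnitTime s x := by
  induction n with
  | zero => exact ⟨0, finZeroElim, finZeroElim, finZeroElim, finZeroElim⟩
  | succ n ih =>
    by_cases hlast : x 0 ≤ s (Fin.last n)
    · exact of_le hs0 hx0 fun i => (hx (Fin.zero_le i)).trans (hlast.trans (hs (Fin.le_last i)))
    have hfirst : x 0 ≤ s 0 := by simpa [← bot_eq_zero] using hsum ⊥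
    obtain ⟨m, hm, hm'⟩ := Fin.exists_castSucc_and_not_succ (fun j => x 0 ≤ s j) hfirst hlast
    obtain ⟨α, β, hα, hβ, hαβ, hmix⟩ : x 0 ∈ segment ℝ (s m.castSucc) (s m.succ) := by
      rw [segment_symm, segment_eq_Icc (hs (Fin.castSucc_le_succ m))]
      exact ⟨(not_le.1 hm').le, hm⟩
    set u := timeShare α β m.castSucc m.succ s
    have hu : u m.castSucc = x 0 := by simp [u, timeShare_apply, ← hmix]
    have hinter := Fin.timeShare_succAbove_mem_Icc hs hα hβ hαβ m
    have hrest : PreemptiveScheduleInUnitTime (Fin.removeNth m.castSucc u) (Fin.tail x) :=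
      ih (Fin.antitone_of_interlaced hs hinter) (fun j => (hs0 _).trans_le (hinter j).1)
        (hx.comp_monotone Fin.strictMono_succ.monotone) (fun i => hx0 _)
        (Fin.sum_Iic_tail_le_removeNth_timeShare hs hx hsum hα hβ hαβ hm hu)
    refine of_timeShare hα hβ hαβ m.castSucc m.succ ?_
    have h := hrest.insertNth_cons m.castSucc (u m.castSucc)
    rwa [Fin.insertNth_self_removeNth, hu, Fin.cons_self_tail] at h

end PreemptiveScheduleInUnitTime

/-- Given jobs with service requirements `x₁ ≥ ... ≥ x_k ≥ 0` and machines with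
speeds `s₁ > ... > s_k > 0`, a preemptive schedule completing all jobs within one
unit of time exists iff `∑_{i≤ℓ} x i ≤ ∑_{i≤ℓ} s i` for all `ℓ`. -/
theorem stmt1 {k : ℕ} (s x : Fin k → ℝ)
    (hs : StrictAnti s) (hspos : ∀ j, 0 < s j)
    (hx : Antitone x) (hxnonneg : ∀ i, 0 ≤ x i) :
    PreemptiveScheduleInUnitTime s x ↔
      ∀ ℓ : Fin k, ∑ i ∈ Finset.Iic ℓ, x i ≤ ∑ i ∈ Finset.Iic ℓ, s i :=
  ⟨fun h => h.sum_Iic_le hs.antitone fun j => (hspos j).le,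
    PreemptiveScheduleInUnitTime.of_sum_Iic_le hs.antitone hspos hx hxnonneg⟩
end

section
/- For positive reals B_1 ≥ B_2 with D_1 > D_2 > 0: if (B_1+B_2)/(D_1+D_2) ≥ B_1/D_1 and (B_1+B_2)/(D_1+D_2) > (B_1+B_2+B_3)/(D_1+D_2+D_3) for some B_3 ≤ B_2 and D_3 < D_2, then B_2/D_2 > B_3/D_3. Consequently (Lemma on equal budgets): in the Find-Price-Block routine, if two consecutive bidders have equal budgets B_i = B_{i+1}, then slot i cannot be the last slot of the computed price block. -/
/-!
The mediant `(a + c) / (b + d)` lies between `a / b` and `c / d`. So `h1` puts `B₂ / D₂` above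
`(B₁ + B₂) / (D₁ + D₂)`, and `h2` puts `B₃ / D₃` below it.
-/

section Mediant

variable {α : Type*} [Field α] [LinearOrder α] [IsStrictOrderedRing α] {a b c d : α}

theorem mediant_le_div_right_of_div_left_le (hb : 0 < b) (hd : 0 < d)
    (h : a / b ≤ (a + c) / (b + d)) : (a + c) / (b + d) ≤ c / d := by
  rw [div_le_div_iff₀ hb (add_pos hb hd)] at h
  rw [div_le_div_iff₀ (add_pos hb hd) hd]
  linarith

theorem div_right_lt_mediant_of_mediant_lt (hb : 0 < b) (hd : 0 < d)
    (h : (a + c) / (b + d) < a / b) : c / d < (a + c) / (b + d) := by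
  rw [div_lt_div_iff₀ (add_pos hb hd) hb] at h
  rw [div_lt_div_iff₀ hd (add_pos hb hd)]
  linarith

end Mediant

theorem stmt3_general (B₁ B₂ B₃ D₁ D₂ D₃ : ℝ)
    (hD₃ : 0 < D₃) (hD23 : D₃ < D₂) (hD12 : D₂ < D₁)
    (h1 : B₁ / D₁ ≤ (B₁ + B₂) / (D₁ + D₂))
    (h2 : (B₁ + B₂ + B₃) / (D₁ + D₂ + D₃) < (B₁ + B₂) / (D₁ + D₂)) :
    B₃ / D₃ < B₂ / D₂ := by
  have hD₂ : 0 < D₂ := hD₃.trans hD23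
  have hD₁ : 0 < D₁ := hD₂.trans hD12
  calc B₃ / D₃ < (B₁ + B₂) / (D₁ + D₂) :=
        (div_right_lt_mediant_of_mediant_lt (add_pos hD₁ hD₂) hD₃ h2).trans h2
    _ ≤ B₂ / D₂ := mediant_le_div_right_of_div_left_le hD₁ hD₂ h1

/-- Arithmetic core of the equal-budgets lemma for Find-Price-Block: if slot 2 were the
last slot of the price block, i.e. `(B₁+B₂)/(D₁+D₂) ≥ B₁/D₁` and
`(B₁+B₂)/(D₁+D₂) > (B₁+B₂+B₃)/(D₁+D₂+D₃)`, then `B₂/D₂ > B₃/D₃`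
(so the block cannot end between two bidders with equal budgets). -/
theorem stmt3 (B₁ B₂ B₃ D₁ D₂ D₃ : ℝ)
    (hB₁ : 0 < B₁) (hB₂ : 0 < B₂) (hB12 : B₂ ≤ B₁) (hB23 : B₃ ≤ B₂)
    (hD₃ : 0 < D₃) (hD23 : D₃ < D₂) (hD12 : D₂ < D₁)
    (h1 : B₁ / D₁ ≤ (B₁ + B₂) / (D₁ + D₂))
    (h2 : (B₁ + B₂ + B₃) / (D₁ + D₂ + D₃) < (B₁ + B₂) / (D₁ + D₂)) :
    B₃ / D₃ < B₂ / D₂ :=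
  stmt3_general B₁ B₂ B₃ D₁ D₂ D₃ hD₃ hD23 hD12 h1 h2
end

section
/- The allocation of the Find-Price-Block routine is feasible: with budgets B_1 ≥ ... ≥ B_n > 0, slots D_1 > ... > D_n > 0, price p = max_ℓ (Σ_{i≤ℓ} B_i)/(Σ_{i≤ℓ} D_i), and ℓ* the largest maximizer, the clicks c_i = B_i/p for i ≤ ℓ* satisfy c_1 ≥ ... ≥ c_{ℓ*} and Σ_{i≤ℓ} c_i ≤ Σ_{i≤ℓ} D_i for every ℓ ≤ ℓ*, with equality at ℓ = ℓ*. -/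
open Finset

section PrefixRatio

variable {ι : Type*} {s : Finset ι} {B D : ι → ℝ} {p : ℝ}

theorem sum_div_le_sum_of_div_le (hp : 0 < p) (hD : 0 < ∑ i ∈ s, D i)
    (h : (∑ i ∈ s, B i) / (∑ i ∈ s, D i) ≤ p) :
    ∑ i ∈ s, B i / p ≤ ∑ i ∈ s, D i := by
  rw [← sum_div, div_le_iff₀ hp]
  rw [div_le_iff₀ hD] at h
  linarith

theorem sum_div_eq_sum_of_div_eq (hp : 0 < p) (hD : 0 < ∑ i ∈ s, D i)
    (h : (∑ i ∈ s, B i) / (∑ i ∈ s, D i) = p) :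
    ∑ i ∈ s, B i / p = ∑ i ∈ s, D i := by
  rw [← sum_div, div_eq_iff hp.ne']
  rw [div_eq_iff hD.ne'] at h
  linarith

end PrefixRatio

theorem sum_Iic_pos {n : ℕ} {f : Fin n → ℝ} (hf : ∀ i, 0 < f i) (ℓ : Fin n) :
    0 < ∑ i ∈ Iic ℓ, f i :=
  sum_pos (fun i _ => hf i) ⟨ℓ, mem_Iic.2 le_rfl⟩

theorem stmt5_general {n : ℕ} (B D : Fin n → ℝ)
    (hB : Antitone B) (hBpos : ∀ i, 0 < B i)
    (hDpos : ∀ i, 0 < D i)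
    (r : Fin n → ℝ)
    (hr : ∀ ℓ, r ℓ = (∑ i ∈ Finset.Iic ℓ, B i) / (∑ i ∈ Finset.Iic ℓ, D i))
    (p : ℝ) (lstar : Fin n)
    (hmax : ∀ ℓ, r ℓ ≤ p) (hp : r lstar = p) :
    (∀ i j : Fin n, i ≤ j → j ≤ lstar → B j / p ≤ B i / p) ∧
    (∀ ℓ : Fin n, ℓ ≤ lstar → ∑ i ∈ Finset.Iic ℓ, B i / p ≤ ∑ i ∈ Finset.Iic ℓ, D i) ∧
    (∑ i ∈ Finset.Iic lstar, B i / p = ∑ i ∈ Finset.Iic lstar, D i) := by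
  have hp_pos : 0 < p := hp ▸ hr lstar ▸ div_pos (sum_Iic_pos hBpos lstar) (sum_Iic_pos hDpos lstar)
  refine ⟨fun i j hij _ => div_le_div_of_nonneg_right (hB hij) hp_pos.le, fun ℓ _ => ?_, ?_⟩
  · exact sum_div_le_sum_of_div_le hp_pos (sum_Iic_pos hDpos ℓ) (hr ℓ ▸ hmax ℓ)
  · exact sum_div_eq_sum_of_div_eq hp_pos (sum_Iic_pos hDpos lstar) (hr lstar ▸ hp)

/-- Feasibility of the Find-Price-Block allocation: with sorted budgets and slots,
price `p = max_ℓ r_ℓ` and `l*` the largest maximizer, the clicks `cᵢ = Bᵢ/p` for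
`i ≤ l*` are nonincreasing and satisfy all prefix constraints, with equality at `l*`. -/
theorem stmt5 {n : ℕ} (B D : Fin n → ℝ)
    (hB : Antitone B) (hBpos : ∀ i, 0 < B i)
    (hD : StrictAnti D) (hDpos : ∀ i, 0 < D i)
    (r : Fin n → ℝ)
    (hr : ∀ ℓ, r ℓ = (∑ i ∈ Finset.Iic ℓ, B i) / (∑ i ∈ Finset.Iic ℓ, D i))
    (p : ℝ) (lstar : Fin n)
    (hmax : ∀ ℓ, r ℓ ≤ p) (hp : r lstar = p)
    (hlargest : ∀ ℓ, r ℓ = p → ℓ ≤ lstar) :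
    (∀ i j : Fin n, i ≤ j → j ≤ lstar → B j / p ≤ B i / p) ∧
    (∀ ℓ : Fin n, ℓ ≤ lstar → ∑ i ∈ Finset.Iic ℓ, B i / p ≤ ∑ i ∈ Finset.Iic ℓ, D i) ∧
    (∑ i ∈ Finset.Iic lstar, B i / p = ∑ i ∈ Finset.Iic lstar, D i) :=
  stmt5_general B D hB hBpos hDpos r hr p lstar hmax hp
end

section
/- The greedy first-price allocation is revenue-maximizing: given bids b_1 > b_2 > ... > b_n > 0, budgets B_i > 0, and slot clicks D_1 > ... > D_n ≥ 0, the allocation that sequentially gives each bidder i (in decreasing bid order) the maximum clicks c_i subject to c_i ≤ B_i/b_i and feasibility with previously fixed c_1,...,c_{i−1} maximizes Σ_i b_i c_i over all vectors c ≥ 0 satisfying c_i ≤ B_i/b_i for all i and Σ_{i∈S} c_i ≤ D_1 + ... + D_{|S|} for all subsets S ⊆ {1,...,n}. -/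
/-!
The feasible allocations form a polymatroid: since `D` decreases, the capacity
`S ↦ D 0 + ⋯ + D (#S - 1)` is submodular, so tight sets are closed under union. If `c` is
greedy, every bidder `i ≤ k` whose truncated allocation could still grow lies in a tight set of
the truncation of `c` to the first `k` bidders; the union of these tight sets blocks every
improvement, so `c` maximises each prefix sum `c 0 + ⋯ + c k` over feasible allocations.
As the bids decrease, Abel summation turns this prefix dominance into revenue dominance.
-/

open Finset

/-- Feasibility of a click allocation: nonnegative, respecting the budget caps
`cᵢ ≤ Bᵢ/bᵢ`, and every subset of bidders gets at most the sum of the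
corresponding number of largest slot capacities. -/
def FeasClicks {n : ℕ} (b B : Fin n → ℝ) (D : ℕ → ℝ) (c : Fin n → ℝ) : Prop :=
  (∀ i, 0 ≤ c i) ∧ (∀ i, c i ≤ B i / b i) ∧
  (∀ S : Finset (Fin n), ∑ i ∈ S, c i ≤ ∑ j ∈ Finset.range S.card, D j)

section Polymatroid

variable {ι : Type*} [DecidableEq ι] {f : Finset ι → ℝ} {x y : ι → ℝ}

def IsTight (f : Finset ι → ℝ) (x : ι → ℝ) (S : Finset ι) : Prop :=
  ∑ i ∈ S, x i = f S

lemma IsTight.union (hf : ∀ S T, f (S ∪ T) + f (S ∩ T) ≤ f S + f T)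
    (hx : ∀ S, ∑ i ∈ S, x i ≤ f S) {S T : Finset ι}
    (hS : IsTight f x S) (hT : IsTight f x T) : IsTight f x (S ∪ T) := by
  have hunion := hx (S ∪ T)
  have hinter := hx (S ∩ T)
  have hsum : ∑ i ∈ S ∪ T, x i + ∑ i ∈ S ∩ T, x i = ∑ i ∈ S, x i + ∑ i ∈ T, x i :=
    sum_union_inter
  unfold IsTight at *
  linarith [hf S T]

variable [Fintype ι]

lemma exists_isTight_forall_subset (hf : ∀ S T, f (S ∪ T) + f (S ∩ T) ≤ f S + f T)
    (hf₀ : f ∅ = 0) (hx : ∀ S, ∑ i ∈ S, x i ≤ f S) :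
    ∃ U, IsTight f x U ∧ ∀ S, IsTight f x S → S ⊆ U := by
  classical
  refine ⟨(univ.filter (IsTight f x)).sup id, ?_, fun S hS => ?_⟩
  · refine sup_induction (by simp [IsTight, hf₀]) (fun S hS T hT => hS.union hf hx hT) ?_
    simp
  · exact le_sup (f := id) (mem_filter.2 ⟨mem_univ S, hS⟩)

lemma sum_le_sum_of_forall_lt_isTight (hf : ∀ S T, f (S ∪ T) + f (S ∩ T) ≤ f S + f T)
    (hf₀ : f ∅ = 0) (hx : ∀ S, ∑ i ∈ S, x i ≤ f S) (hy : ∀ S, ∑ i ∈ S, y i ≤ f S)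
    (hblock : ∀ i, x i < y i → ∃ S, i ∈ S ∧ IsTight f x S) :
    ∑ i, y i ≤ ∑ i, x i := by
  obtain ⟨U, hU, hmax⟩ := exists_isTight_forall_subset hf hf₀ hx
  have hin : ∑ i ∈ U, y i ≤ ∑ i ∈ U, x i := (hy U).trans_eq hU.symm
  have hout : ∑ i ∈ Uᶜ, y i ≤ ∑ i ∈ Uᶜ, x i := by
    refine sum_le_sum fun i hi => not_lt.1 fun hlt => mem_compl.1 hi ?_
    obtain ⟨S, hiS, hS⟩ := hblock i hlt
    exact hmax S hS hiS
  rw [← sum_add_sum_compl U y, ← sum_add_sum_compl U x]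
  exact add_le_add hin hout

lemma eventually_sum_add_single_le (hx : ∀ S, ∑ i ∈ S, x i ≤ f S) {i : ι}
    (hslack : ∀ S, i ∈ S → ¬ IsTight f x S) :
    ∀ᶠ δ in nhdsWithin 0 (Set.Ioi 0), ∀ S, ∑ j ∈ S, (x + Pi.single i δ : ι → ℝ) j ≤ f S := by
  refine Filter.eventually_all.2 fun S => ?_
  simp only [Pi.add_apply, sum_add_distrib, sum_pi_single']
  by_cases hiS : i ∈ S
  · have hlt : 0 < f S - ∑ j ∈ S, x j := sub_pos.2 ((hx S).lt_of_ne (hslack S hiS))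
    filter_upwards [nhdsWithin_le_nhds (eventually_lt_nhds hlt)] with δ hδ
    rw [if_pos hiS]
    linarith
  · simp [hiS, hx S]

end Polymatroid

lemma AntitoneOn.sum_mul_le_sum_mul_of_prefix_le {α : Type*} [LinearOrder α]
    {s : Finset α} {w x y : α → ℝ} (hw : AntitoneOn w s) (hw₀ : ∀ i ∈ s, 0 ≤ w i)
    (hxy : ∀ j ∈ s, ∑ i ∈ s with i ≤ j, x i ≤ ∑ i ∈ s with i ≤ j, y i) :
    ∑ i ∈ s, w i * x i ≤ ∑ i ∈ s, w i * y i := by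
  classical
  induction s using Finset.induction_on_max generalizing w with
  | empty => simp
  | insert a s hlt ih =>
    have ha : a ∉ s := fun h => lt_irrefl a (hlt a h)
    have hwa : ∀ i ∈ s, w a ≤ w i := fun i hi =>
      hw (by simp [hi]) (by simp) (hlt i hi).le
    -- subtracting `w a` makes the last weight vanish
    have hrest : ∑ i ∈ s, (w i - w a) * x i ≤ ∑ i ∈ s, (w i - w a) * y i := by
      refine ih (fun i hi j hj hij => ?_) (fun i hi => sub_nonneg.2 (hwa i hi)) fun j hj => ?_
      · exact sub_le_sub_right (hw (by simp [hi]) (by simp [hj]) hij) _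
      · have := hxy j (mem_insert_of_mem hj)
        rwa [filter_insert, if_neg (not_le.2 (hlt j hj))] at this
    have hall : ∑ i ∈ insert a s, x i ≤ ∑ i ∈ insert a s, y i := by
      have := hxy a (mem_insert_self a s)
      rwa [filter_true_of_mem fun i hi => ?_] at this
      rcases mem_insert.1 hi with rfl | hi
      exacts [le_rfl, (hlt i hi).le]
    have hlast := mul_le_mul_of_nonneg_left hall (hw₀ a (mem_insert_self a s))
    simp only [sub_mul, sum_sub_distrib, ← mul_sum] at hrest
    simp only [sum_insert ha, mul_add] at hlast ⊢
    linarith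

section Clicks

variable {n : ℕ} {b B : Fin n → ℝ} {D : ℕ → ℝ}

lemma FeasClicks.of_le {c d : Fin n → ℝ} (hc : FeasClicks b B D c) (hd₀ : 0 ≤ d) (hdc : d ≤ c) :
    FeasClicks b B D d :=
  ⟨hd₀, fun i => (hdc i).trans (hc.2.1 i), fun S => (sum_le_sum fun i _ => hdc i).trans (hc.2.2 S)⟩

lemma FeasClicks.ite_zero {c : Fin n → ℝ} (hc : FeasClicks b B D c) (p : Fin n → Prop)
    [DecidablePred p] : FeasClicks b B D fun i => if p i then c i else 0 :=
  hc.of_le (fun i => by by_cases h : p i <;> simp [h, hc.1 i])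
    (fun i => by by_cases h : p i <;> simp [h, hc.1 i])

lemma sum_range_add_sum_range_le_of_antitoneOn (hD : AntitoneOn D (Set.Iio n)) {p q r u : ℕ}
    (h : u + r = p + q) (hrp : r ≤ p) (hrq : r ≤ q) (hun : u ≤ n) :
    ∑ j ∈ range u, D j + ∑ j ∈ range r, D j ≤ ∑ j ∈ range p, D j + ∑ j ∈ range q, D j := by
  obtain ⟨m, rfl⟩ : ∃ m, u = q + m := ⟨u - q, by omega⟩
  obtain rfl : p = r + m := by omega
  have hstep : ∑ k ∈ range m, D (q + k) ≤ ∑ k ∈ range m, D (r + k) :=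
    sum_le_sum fun k hk => by
      have := mem_range.1 hk
      exact hD (show r + k < n by omega) (show q + k < n by omega) (by omega)
  rw [sum_range_add, sum_range_add]
  linarith

lemma sum_range_card_submodular (hD : AntitoneOn D (Set.Iio n)) (S T : Finset (Fin n)) :
    ∑ j ∈ range #(S ∪ T), D j + ∑ j ∈ range #(S ∩ T), D j ≤
      ∑ j ∈ range #S, D j + ∑ j ∈ range #T, D j :=
  sum_range_add_sum_range_le_of_antitoneOn hD (card_union_add_card_inter S T)
    (card_le_card inter_subset_left) (card_le_card inter_subset_right)
    ((card_le_univ _).trans_eq (Fintype.card_fin n))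

def IsGreedyAlloc (b B : Fin n → ℝ) (D : ℕ → ℝ) (c : Fin n → ℝ) : Prop :=
  ∀ i : Fin n, ∀ d : Fin n → ℝ,
    FeasClicks b B D d → (∀ j : Fin n, j < i → d j = c j) → d i ≤ c i

lemma IsGreedyAlloc.sum_filter_le (hD : AntitoneOn D (Set.Iio n)) {c d : Fin n → ℝ}
    (hgreedy : IsGreedyAlloc b B D c) (hc : FeasClicks b B D c) (hd : FeasClicks b B D d)
    (k : Fin n) : ∑ i with i ≤ k, d i ≤ ∑ i with i ≤ k, c i := by
  set x : Fin n → ℝ := fun i => if i ≤ k then c i else 0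
  set y : Fin n → ℝ := fun i => if i ≤ k then d i else 0
  have hx : FeasClicks b B D x := hc.ite_zero _
  have hy : FeasClicks b B D y := hd.ite_zero _
  rw [sum_filter, sum_filter]
  refine sum_le_sum_of_forall_lt_isTight (sum_range_card_submodular hD) (by simp)
    hx.2.2 hy.2.2 fun i hlt => ?_
  have hik : i ≤ k := by
    by_contra h
    simp [h] at hlt
  simp only [if_pos hik] at hlt
  -- otherwise `x i` could be raised a little within the caps, against greedy maximality at `i`
  by_contra! hslack
  have hgap : 0 < B i / b i - c i := by linarith [hd.2.1 i]
  obtain ⟨δ, ⟨hzS, hδgap⟩, hδ⟩ := ((eventually_sum_add_single_le hx.2.2 hslack).and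
    (nhdsWithin_le_nhds (eventually_lt_nhds hgap))).and self_mem_nhdsWithin |>.exists
  replace hδ : 0 < δ := hδ
  have hz : FeasClicks b B D (x + Pi.single i δ) := by
    refine ⟨fun j => add_nonneg (hx.1 j) ((Pi.single_nonneg (α := fun _ => ℝ)).2 hδ.le j),
      fun j => ?_, hzS⟩
    rcases eq_or_ne j i with rfl | hji
    · simp only [Pi.add_apply, Pi.single_eq_same, x, if_pos hik]
      linarith
    · simpa [hji] using hx.2.1 j
  have hzi := hgreedy i _ hz fun j hji => by
    simp [x, hji.ne, (hji.le.trans hik)]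
  simp only [Pi.add_apply, Pi.single_eq_same, x, if_pos hik] at hzi
  linarith

end Clicks

theorem stmt8_general {n : ℕ} (b B : Fin n → ℝ) (D : ℕ → ℝ)
    (hb : StrictAnti b) (hbpos : ∀ i, 0 < b i)
    (hD : ∀ j k : ℕ, j < k → k < n → D k < D j)
    (c : Fin n → ℝ) (hfeas : FeasClicks b B D c)
    (hgreedy : ∀ i : Fin n, ∀ d : Fin n → ℝ,
      FeasClicks b B D d → (∀ j : Fin n, j < i → d j = c j) → d i ≤ c i) :
    ∀ d : Fin n → ℝ, FeasClicks b B D d → ∑ i, b i * d i ≤ ∑ i, b i * c i := by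
  intro d hd
  have hDanti : AntitoneOn D (Set.Iio n) :=
    StrictAntiOn.antitoneOn fun j _ k hk hjk => hD j k hjk hk
  exact (hb.antitone.antitoneOn _).sum_mul_le_sum_mul_of_prefix_le (fun i _ => (hbpos i).le)
    fun k _ => IsGreedyAlloc.sum_filter_le hDanti hgreedy hfeas hd k

/-- The greedy first-price allocation (which processes bidders in decreasing bid order,
giving each the maximum feasible number of clicks given its predecessors' allocations)
maximizes revenue `∑ bᵢcᵢ` over all feasible allocations. -/
theorem stmt8 {n : ℕ} (b B : Fin n → ℝ) (D : ℕ → ℝ)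
    (hb : StrictAnti b) (hbpos : ∀ i, 0 < b i) (hBpos : ∀ i, 0 < B i)
    (hD : ∀ j k : ℕ, j < k → k < n → D k < D j) (hDnonneg : ∀ j, 0 ≤ D j)
    (c : Fin n → ℝ) (hfeas : FeasClicks b B D c)
    (hgreedy : ∀ i : Fin n, ∀ d : Fin n → ℝ,
      FeasClicks b B D d → (∀ j : Fin n, j < i → d j = c j) → d i ≤ c i) :
    ∀ d : Fin n → ℝ, FeasClicks b B D d → ∑ i, b i * d i ≤ ∑ i, b i * c i :=
  stmt8_general b B D hb hbpos hD c hfeas hgreedy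
end

section
/- Exchange step in the greedy optimality proof: let c* be a feasible revenue-maximizing allocation and c the greedy allocation, agreeing on coordinates 1,...,i−1 with c_i > c*_i. Let c*_max = max{c*_{i+1},...,c*_n} and J = {j > i : c*_j = c*_max}. Then every subset S ⊆ {1,...,n} with i ∈ S whose constraint Σ_{ℓ∈S} c*_ℓ ≤ D_1+...+D_{|S|} is tight must contain all of J, provided c*_max > 0 and the nonzero D_j are distinct. -/
/-!
Suppose a tight set `S ∋ i` missed some `j > i` with `c* j = cmax`. Feasibility of `S ∪ {j}`
gives `cmax ≤ D |S|`, so by monotonicity every capacity `D k` with `k < |S|` is at least `cmax`. Split `S` into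
`A = {ℓ ∈ S | ℓ ≤ i}` and the rest. On `A` the greedy allocation dominates `c*` strictly (they agree
below `i` and `c* i < c i`), so `c*` has slack against the first `|A|` capacities; each of the
remaining `|S| - |A|` coordinates is at most `cmax`, hence fits into one of the capacities
`D |A|, …, D (|S| - 1)`. Thus `S` is not tight after all.
-/

open Finset

section SlotFeasibility

variable {ι M : Type*} [AddCommMonoid M] [PartialOrder M] [IsOrderedCancelAddMonoid M]

def SlotFeasible (D : ℕ → M) (x : ι → M) : Prop :=
  ∀ S : Finset ι, ∑ ℓ ∈ S, x ℓ ≤ ∑ k ∈ range #S, D k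

variable [DecidableEq ι] {D : ℕ → M} {x : ι → M} {S : Finset ι}

theorem SlotFeasible.le_of_sum_eq {j : ι} (hx : SlotFeasible D x) (hj : j ∉ S)
    (htight : ∑ ℓ ∈ S, x ℓ = ∑ k ∈ range #S, D k) : x j ≤ D #S := by
  have h := hx (insert j S)
  rw [sum_insert hj, card_insert_of_notMem hj, sum_range_succ, htight, add_comm] at h
  exact le_of_add_le_add_left h

theorem sum_lt_sum_range_of_subset {A : Finset ι} {a : M} (hAS : A ⊆ S)
    (hA : ∑ ℓ ∈ A, x ℓ < ∑ k ∈ range #A, D k) (hx : ∀ ℓ ∈ S \ A, x ℓ ≤ a)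
    (hD : ∀ k < #S, a ≤ D k) : ∑ ℓ ∈ S, x ℓ < ∑ k ∈ range #S, D k := by
  have hrest : ∑ ℓ ∈ S \ A, x ℓ ≤ ∑ k ∈ Ico #A #S, D k :=
    calc ∑ ℓ ∈ S \ A, x ℓ ≤ #(S \ A) • a := sum_le_card_nsmul _ _ _ hx
      _ = #(Ico #A #S) • a := by rw [card_sdiff_of_subset hAS, Nat.card_Ico]
      _ ≤ ∑ k ∈ Ico #A #S, D k := card_nsmul_le_sum _ _ _ fun k hk ↦ hD k (mem_Ico.1 hk).2
  rw [← sum_sdiff hAS, ← sum_range_add_sum_Ico _ (card_le_card hAS), add_comm]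
  exact add_lt_add_of_lt_of_le hA hrest

end SlotFeasibility

theorem stmt9_general {n : ℕ} (D : ℕ → ℝ)
    (hDanti : Antitone D)
    (c cstar : Fin n → ℝ)
    (hcfeas : ∀ S : Finset (Fin n), ∑ ℓ ∈ S, c ℓ ≤ ∑ j ∈ Finset.range S.card, D j)
    (hcstarfeas : ∀ S : Finset (Fin n), ∑ ℓ ∈ S, cstar ℓ ≤ ∑ j ∈ Finset.range S.card, D j)
    (i : Fin n) (hagree : ∀ j : Fin n, j < i → c j = cstar j) (hgt : cstar i < c i)
    (cmax : ℝ) (hcmaxub : ∀ j : Fin n, i < j → cstar j ≤ cmax) :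
    ∀ S : Finset (Fin n), i ∈ S →
      (∑ ℓ ∈ S, cstar ℓ = ∑ j ∈ Finset.range S.card, D j) →
      ∀ j : Fin n, i < j → cstar j = cmax → j ∈ S := by
  intro S hiS htight j hij hjc
  by_contra hjS
  have hcap : cmax ≤ D #S := hjc ▸ SlotFeasible.le_of_sum_eq hcstarfeas hjS htight
  set A := S.filter (· ≤ i)
  have hslack : ∑ ℓ ∈ A, cstar ℓ < ∑ k ∈ range #A, D k := by
    refine lt_of_lt_of_le (sum_lt_sum (fun ℓ hℓ ↦ ?_) ⟨i, by simp [A, hiS], hgt⟩) (hcfeas A)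
    rcases (mem_filter.1 hℓ).2.lt_or_eq with hlt | rfl
    · exact (hagree ℓ hlt).ge
    · exact hgt.le
  have hrest : ∀ ℓ ∈ S \ A, cstar ℓ ≤ cmax := fun ℓ hℓ ↦
    hcmaxub ℓ (not_le.1 fun h ↦ (mem_sdiff.1 hℓ).2 (mem_filter.2 ⟨(mem_sdiff.1 hℓ).1, h⟩))
  exact (sum_lt_sum_range_of_subset (filter_subset _ S) hslack hrest
    fun k hk ↦ hcap.trans (hDanti hk.le)).ne htight

/-- Exchange step in the greedy-optimality proof: if the feasible allocations `c`
(greedy) and `c*` agree on coordinates below `i` with `c i > c* i`, `cmax` is the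
maximum of `c*` over indices above `i` with `cmax > 0`, and the nonzero capacities
are distinct, then every tight subset constraint containing `i` contains every
index `j > i` attaining `cmax`. -/
theorem stmt9 {n : ℕ} (D : ℕ → ℝ)
    (hDanti : Antitone D) (hDnonneg : ∀ j, 0 ≤ D j)
    (hDdistinct : ∀ j k : ℕ, j < k → D k ≠ 0 → D k < D j)
    (c cstar : Fin n → ℝ)
    (hcnonneg : ∀ i, 0 ≤ c i) (hcstarnonneg : ∀ i, 0 ≤ cstar i)
    (hcfeas : ∀ S : Finset (Fin n), ∑ ℓ ∈ S, c ℓ ≤ ∑ j ∈ Finset.range S.card, D j)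
    (hcstarfeas : ∀ S : Finset (Fin n), ∑ ℓ ∈ S, cstar ℓ ≤ ∑ j ∈ Finset.range S.card, D j)
    (i : Fin n) (hagree : ∀ j : Fin n, j < i → c j = cstar j) (hgt : cstar i < c i)
    (cmax : ℝ) (hcmaxub : ∀ j : Fin n, i < j → cstar j ≤ cmax)
    (hcmaxmem : ∃ j : Fin n, i < j ∧ cstar j = cmax) (hcmaxpos : 0 < cmax) :
    ∀ S : Finset (Fin n), i ∈ S →
      (∑ ℓ ∈ S, cstar ℓ = ∑ j ∈ Finset.range S.card, D j) →
      ∀ j : Fin n, i < j → cstar j = cmax → j ∈ S :=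
  stmt9_general D hDanti c cstar hcfeas hcstarfeas i hagree hgt cmax hcmaxub
end

section
/- Adding a bidder to Find-Price-Block without changing the price bounds the new budget: if running Find-Price-Block on budgets B_1 ≥ ... ≥ B_n yields price p with block ending at ℓ*, and adding one more bidder with budget B still yields price p, then B ≤ B_{ℓ*}. -/
open Finset

/-!
If the new budget `B₀` exceeded `B ℓ*`, the `ℓ* + 1` largest budgets of the enlarged list would
sum to at least `B₀ + ∑_{i < ℓ*} B i > ∑_{i ≤ ℓ*} B i`, so the enlarged ratio at `ℓ*` would exceed
the price `p`. The prefix-sum bound comes from interlacing: after inserting one element into a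
sorted list, the `(j+1)`-st entry of the new list is at most the `j`-th entry of the old one.
-/

theorem Antitone.apply_succ_le_of_map_eq_cons {α : Type*} [LinearOrder α] {m : ℕ}
    {f : Fin (m + 1) → α} {g : Fin m → α} {a : α} (hf : Antitone f) (hg : Antitone g)
    (h : univ.val.map f = a ::ₘ univ.val.map g) (j : Fin m) : f j.succ ≤ g j := by
  classical
  by_contra! hlt
  -- count the entries exceeding `g j`: at least `j + 2` on the left, at most `j + 1` on the right
  have hcount := congrArg (Multiset.countP (g j < ·)) h
  rw [Multiset.countP_cons, Multiset.countP_map, Multiset.countP_map] at hcount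
  change #{i | g j < f i} = #{i | g j < g i} + _ at hcount
  have hf_many : j.val + 2 ≤ #{i | g j < f i} := by
    calc j.val + 2 = #(Iic j.succ) := by simp
      _ ≤ _ := card_le_card fun i hi => mem_filter.2 ⟨mem_univ i, hlt.trans_le (hf (mem_Iic.1 hi))⟩
  have hg_few : #{i | g j < g i} ≤ j.val := by
    calc #{i | g j < g i} ≤ #(Iio j) := card_le_card fun i hi =>
          mem_Iio.2 (lt_of_not_ge fun hji => (mem_filter.1 hi).2.not_ge (hg hji))
      _ = j.val := Fin.card_Iio j
  split_ifs at hcount <;> omega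

theorem add_sum_Iio_le_sum_Iic_castSucc {α : Type*} [AddCommGroup α] [PartialOrder α]
    [IsOrderedAddMonoid α] {m : ℕ} {f : Fin (m + 1) → α} {g : Fin m → α} {a : α}
    (hle : ∀ j, f j.succ ≤ g j) (hsum : ∑ i, f i = a + ∑ i, g i) (k : Fin m) :
    a + ∑ i ∈ Iio k, g i ≤ ∑ i ∈ Iic k.castSucc, f i := by
  have hIoi : Ioi k.castSucc = (Ici k).map (Fin.succEmb m) := by
    ext i; simp [Fin.castSucc_lt_iff_succ_le]
  have hf_split : ∑ i ∈ Iic k.castSucc, f i + ∑ i ∈ Ici k, f i.succ = ∑ i, f i := by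
    rw [← sum_add_sum_compl (Iic k.castSucc), show (Iic k.castSucc)ᶜ = Ioi k.castSucc by
      ext; simp, hIoi, sum_map]
    rfl
  have hg_split : ∑ i ∈ Iio k, g i + ∑ i ∈ Ici k, g i = ∑ i, g i := by
    rw [← sum_add_sum_compl (Iio k), show (Iio k)ᶜ = Ici k by ext; simp]
  have htail : ∑ i ∈ Ici k, f i.succ ≤ ∑ i ∈ Ici k, g i := sum_le_sum fun j _ => hle j
  calc a + ∑ i ∈ Iio k, g i = ∑ i, f i - ∑ i ∈ Ici k, g i := by
        rw [hsum, ← hg_split]; abel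
    _ ≤ ∑ i, f i - ∑ i ∈ Ici k, f i.succ := sub_le_sub_left htail _
    _ = ∑ i ∈ Iic k.castSucc, f i := by rw [← hf_split, add_sub_cancel_right]

theorem stmt18_general {m n : ℕ} (hmn : m < n) (B : Fin m → ℝ)
    (hB : Antitone B)
    (D : ℕ → ℝ) (hDpos : ∀ i, i < n → 0 < D i)
    (p : ℝ) (lstar : Fin m)
    (hlstar : (∑ i ∈ Finset.Iic lstar, B i) / (∑ i ∈ Finset.range (lstar.val + 1), D i) = p)
    (B₀ : ℝ)
    (ins : Fin (m + 1) → ℝ) (hins : Antitone ins)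
    (hinsert : Multiset.map ins Finset.univ.val = B₀ ::ₘ Multiset.map B Finset.univ.val)
    (hsameprice : IsGreatest
      {x : ℝ | ∃ ℓ : Fin (m + 1),
        x = (∑ i ∈ Finset.Iic ℓ, ins i) / (∑ i ∈ Finset.range (ℓ.val + 1), D i)} p) :
    B₀ ≤ B lstar := by
  by_contra! hlt
  have hden : 0 < ∑ i ∈ range (lstar.val + 1), D i :=
    sum_pos (fun i hi => hDpos i (by have := mem_range.1 hi; omega)) nonempty_range_add_one
  have htotal : ∑ i, ins i = B₀ + ∑ i, B i := by
    simpa only [sum_eq_multiset_sum, Multiset.sum_cons] using congrArg Multiset.sum hinsert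
  have hprefix : ∑ i ∈ Iic lstar, B i < ∑ i ∈ Iic lstar.castSucc, ins i :=
    calc ∑ i ∈ Iic lstar, B i = B lstar + ∑ i ∈ Iio lstar, B i := by
          rw [← Iio_insert, sum_insert (by simp)]
      _ < B₀ + ∑ i ∈ Iio lstar, B i := by gcongr
      _ ≤ _ := add_sum_Iio_le_sum_Iic_castSucc (hins.apply_succ_le_of_map_eq_cons hB hinsert)
          htotal lstar
  have hle := hsameprice.2 ⟨lstar.castSucc, rfl⟩
  rw [Fin.val_castSucc, ← hlstar] at hle
  exact (div_lt_div_of_pos_right hprefix hden).not_ge hle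

/-- Adding a bidder to Find-Price-Block without changing the price bounds the new
budget: running Find-Price-Block on sorted budgets `B` over `m` bidders and slots
`D 0 > D 1 > ... > 0` yields price `p = max_ℓ r_ℓ` with `lstar` the largest
maximizer; if inserting one more bidder with budget `B₀` (giving the sorted list
`ins` over `m+1` bidders) still yields price `p`, then `B₀ ≤ B lstar`. -/
theorem stmt18 {m n : ℕ} (hmn : m < n) (B : Fin m → ℝ)
    (hB : Antitone B) (hBpos : ∀ i, 0 < B i)
    (D : ℕ → ℝ) (hD : ∀ i j, i < j → j < n → D j < D i) (hDpos : ∀ i, i < n → 0 < D i)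
    (p : ℝ) (lstar : Fin m)
    (hp : IsGreatest
      {x : ℝ | ∃ ℓ : Fin m,
        x = (∑ i ∈ Finset.Iic ℓ, B i) / (∑ i ∈ Finset.range (ℓ.val + 1), D i)} p)
    (hlstar : (∑ i ∈ Finset.Iic lstar, B i) / (∑ i ∈ Finset.range (lstar.val + 1), D i) = p)
    (B₀ : ℝ) (hB₀ : 0 < B₀)
    (ins : Fin (m + 1) → ℝ) (hins : Antitone ins)
    (hinsert : Multiset.map ins Finset.univ.val = B₀ ::ₘ Multiset.map B Finset.univ.val)
    (hsameprice : IsGreatest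
      {x : ℝ | ∃ ℓ : Fin (m + 1),
        x = (∑ i ∈ Finset.Iic ℓ, ins i) / (∑ i ∈ Finset.range (ℓ.val + 1), D i)} p) :
    B₀ ≤ B lstar :=
  stmt18_general hmn B hB D hDpos p lstar hlstar B₀ ins hins hinsert hsameprice
end
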